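/- (Uniqueness Lemma) Let v : S → {T,F} be a truth assignment and define P as the set of pairs ⟨α, V⟩ with α ∈ S̄ and V ∈ {T,F} such that some S-based construction sequence for α has associated truth-value sequence ending in V. Then for every α ∈ S̄ there is exactly one V ∈ {T,F} with ⟨α, V⟩ ∈ P; hence P is (the graph of) a function h : S̄ → {T,F}. -/

import Mathlib

/-- Symbols of the language of sentential logic: parentheses, the five
connectives, and sentence symbols `A_n`. -/
inductive SLSym : Type
  | lpar | rpar | neg | conj | disj | imp | iff
  | ss (n : ℕ)
deriving DecidableEq

/-- An expression is a finite sequence of symbols. -/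
abbrev Expr := List SLSym

/-- The formula-building operation `ε¬(α) = (¬α)`. -/
def eNeg (a : Expr) : Expr := SLSym.lpar :: SLSym.neg :: a ++ [SLSym.rpar]

/-- The formula-building operation `ε□(α, β) = (α □ β)` for a binary connective `□`. -/
def eBin (c : SLSym) (a b : Expr) : Expr := SLSym.lpar :: a ++ c :: b ++ [SLSym.rpar]

/-- The four binary connectives. -/
def binSyms : List SLSym := [SLSym.conj, SLSym.disj, SLSym.imp, SLSym.iff]

/-- `l` is a construction sequence: each entry is a sentence symbol, or `ε¬`
of an earlier entry, or `ε□` of two earlier entries. -/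
def IsCS (l : List Expr) : Prop :=
  ∀ i < l.length,
    (∃ n, l.getD i [] = [SLSym.ss n]) ∨
    (∃ j < i, l.getD i [] = eNeg (l.getD j [])) ∨
    (∃ c ∈ binSyms, ∃ j < i, ∃ k < i,
      l.getD i [] = eBin c (l.getD j []) (l.getD k []))

/-- A well-formed formula is the last entry of some construction sequence. -/
def IsWff (a : Expr) : Prop := ∃ l : List Expr, IsCS l ∧ l.getLast? = some a

/-- `S̄`: the set of wffs all of whose sentence symbols lie in `S`. -/
def Sbar (S : Set ℕ) : Set Expr := {a | IsWff a ∧ ∀ n, SLSym.ss n ∈ a → n ∈ S}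

/-- A construction sequence is `S`-based if every sentence symbol occurring in
any of its entries belongs to `S`. -/
def SBased (S : Set ℕ) (l : List Expr) : Prop :=
  IsCS l ∧ ∀ e ∈ l, ∀ n, SLSym.ss n ∈ e → n ∈ S

/-- Truth tables of the binary connectives (`true` = T, `false` = F). -/
def binEval : SLSym → Bool → Bool → Bool
  | SLSym.conj, a, b => a && b
  | SLSym.disj, a, b => a || b
  | SLSym.imp, a, b => !a || b
  | SLSym.iff, a, b => a == b
  | _, _, _ => false

/-- `t` is an associated sequence of truth values for the `S`-based
construction sequence `l`, determined by the truth assignment `v`. -/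
def IsAssocTV (S : Set ℕ) (v : {n : ℕ // n ∈ S} → Bool)
    (l : List Expr) (t : List Bool) : Prop :=
  t.length = l.length ∧
  ∀ i < l.length,
    (∃ n, ∃ hn : n ∈ S, l.getD i [] = [SLSym.ss n] ∧ t.getD i false = v ⟨n, hn⟩) ∨
    (∃ j < i, l.getD i [] = eNeg (l.getD j []) ∧
      t.getD i false = !(t.getD j false)) ∨
    (∃ c ∈ binSyms, ∃ j < i, ∃ k < i,
      l.getD i [] = eBin c (l.getD j []) (l.getD k []) ∧
      t.getD i false = binEval c (t.getD j false) (t.getD k false))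

/-- The set `P` of pairs `⟨α, V⟩` such that some `S`-based construction
sequence for `α` has associated truth-value sequence ending in `V`. -/
def Pset (S : Set ℕ) (v : {n : ℕ // n ∈ S} → Bool) : Set (Expr × Bool) :=
  {p | p.1 ∈ Sbar S ∧ ∃ l t, SBased S l ∧ l.getLast? = some p.1 ∧
    IsAssocTV S v l t ∧ t.getLast? = some p.2}

/-!
Every wff is the expression of a formula tree `φ`, and by unique readability this tree is
unique. Along any associated sequence of truth values each entry is the value of the tree
of the corresponding expression (strong induction along the sequence), so the last value is
forced to be the value of `φ` under any extension `u` of `v`. Conversely, the subformulas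
of `φ` listed in post-order form an `S`-based construction sequence whose associated values
end in that value.
-/

inductive Formula : Type
  | atom (n : ℕ)
  | neg (φ : Formula)
  | bin (c : SLSym) (hc : c ∈ binSyms) (φ ψ : Formula)

namespace Formula

def toExpr : Formula → Expr
  | atom n => [SLSym.ss n]
  | neg φ => eNeg φ.toExpr
  | bin c _ φ ψ => eBin c φ.toExpr ψ.toExpr

def eval (u : ℕ → Bool) : Formula → Bool
  | atom n => u n
  | neg φ => !φ.eval u
  | bin c _ φ ψ => binEval c (φ.eval u) (ψ.eval u)

/-- Unique readability, in the symmetric prefix form that lets the induction go through. -/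
theorem toExpr_append_inj {φ ψ : Formula} {r s : Expr}
    (h : φ.toExpr ++ r = ψ.toExpr ++ s) : φ = ψ ∧ r = s := by
  induction φ generalizing ψ r s with
  | atom n =>
    cases ψ with
    | atom m => simpa [toExpr] using h
    | neg ψ => simp [toExpr, eNeg] at h
    | bin c hc ψ₁ ψ₂ => simp [toExpr, eBin] at h
  | neg φ ih =>
    cases ψ with
    | atom m => simp [toExpr, eNeg] at h
    | neg ψ =>
      simp only [toExpr, eNeg, List.cons_append, List.append_assoc,
        List.nil_append, List.cons.injEq, true_and] at h
      obtain ⟨rfl, h'⟩ := ih h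
      simpa using h'
    | bin c hc ψ₁ ψ₂ => cases ψ₁ <;> simp [toExpr, eNeg, eBin] at h
  | bin c hc φ₁ φ₂ ih₁ ih₂ =>
    cases ψ with
    | atom m => simp [toExpr, eBin] at h
    | neg ψ => cases φ₁ <;> simp [toExpr, eNeg, eBin] at h
    | bin c' hc' ψ₁ ψ₂ =>
      simp only [toExpr, eBin, List.cons_append, List.append_assoc,
        List.nil_append, List.cons.injEq, true_and] at h
      obtain ⟨rfl, h₁⟩ := ih₁ h
      obtain ⟨rfl, h₂⟩ := List.cons_eq_cons.mp h₁
      obtain ⟨rfl, h₃⟩ := ih₂ h₂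
      simpa using h₃

theorem toExpr_injective : Function.Injective toExpr := fun _ _ h =>
  (toExpr_append_inj (r := []) (s := []) (by simpa using h)).1

def children : Formula → List Formula
  | atom _ => []
  | neg φ => [φ]
  | bin _ _ φ ψ => [φ, ψ]

def IsConstructionSeq (L : List Formula) : Prop :=
  ∀ i (hi : i < L.length), ∀ ψ ∈ L[i].children, ψ ∈ L.take i

theorem IsConstructionSeq.append {L₁ L₂ : List Formula} (h₁ : IsConstructionSeq L₁)
    (h₂ : ∀ i (hi : i < L₂.length), ∀ ψ ∈ L₂[i].children, ψ ∈ L₁ ++ L₂.take i) :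
    IsConstructionSeq (L₁ ++ L₂) := by
  intro i hi ψ hψ
  rw [List.take_append]
  by_cases hi₁ : i < L₁.length
  · rw [List.getElem_append_left hi₁] at hψ
    rw [Nat.sub_eq_zero_of_le hi₁.le, List.take_zero, List.append_nil]
    exact h₁ i hi₁ ψ hψ
  · rw [List.getElem_append_right (by omega)] at hψ
    rw [List.take_of_length_le (by omega)]
    exact h₂ _ _ ψ hψ

def subformulas : Formula → List Formula
  | atom n => [atom n]
  | neg φ => φ.subformulas ++ [neg φ]
  | bin c hc φ ψ => φ.subformulas ++ ψ.subformulas ++ [bin c hc φ ψ]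

theorem getLast?_subformulas (φ : Formula) : φ.subformulas.getLast? = some φ := by
  cases φ <;> simp [subformulas]

theorem mem_subformulas_self (φ : Formula) : φ ∈ φ.subformulas :=
  List.mem_of_getLast? φ.getLast?_subformulas

theorem isConstructionSeq_subformulas (φ : Formula) : IsConstructionSeq φ.subformulas := by
  have snoc : ∀ {L : List Formula} {χ : Formula}, IsConstructionSeq L →
      (∀ ψ ∈ χ.children, ψ ∈ L) → IsConstructionSeq (L ++ [χ]) := fun hL hχ =>
    hL.append fun i hi ψ hψ => by
      simp only [List.length_singleton, Nat.lt_one_iff] at hi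
      subst hi
      simpa using hχ ψ hψ
  induction φ with
  | atom n =>
    simpa [subformulas] using snoc (L := []) (fun _ hi => by simp at hi) (by simp [children])
  | neg φ ih => exact snoc ih (by simpa [children] using φ.mem_subformulas_self)
  | bin c hc φ ψ ihφ ihψ =>
    refine snoc (ihφ.append fun i hi χ hχ => List.mem_append_right _ (ihψ i hi χ hχ)) ?_
    simp [children, φ.mem_subformulas_self, ψ.mem_subformulas_self]

theorem toExpr_infix_of_mem_subformulas {φ ψ : Formula} (h : ψ ∈ φ.subformulas) :
    ψ.toExpr <:+: φ.toExpr := by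
  induction φ with
  | atom n => simp_all [subformulas]
  | neg φ ih =>
    simp only [subformulas, List.mem_append, List.mem_singleton] at h
    rcases h with h | rfl
    · exact (ih h).trans ⟨[SLSym.lpar, SLSym.neg], [SLSym.rpar], by simp [toExpr, eNeg]⟩
    · exact List.infix_refl _
  | bin c hc φ₁ φ₂ ih₁ ih₂ =>
    simp only [subformulas, List.mem_append, List.mem_singleton] at h
    rcases h with (h | h) | rfl
    · exact (ih₁ h).trans ⟨[SLSym.lpar], c :: φ₂.toExpr ++ [SLSym.rpar], by simp [toExpr, eBin]⟩
    · exact (ih₂ h).trans ⟨SLSym.lpar :: φ₁.toExpr ++ [c], [SLSym.rpar], by simp [toExpr, eBin]⟩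
    · exact List.infix_refl _

end Formula

section
variable {S : Set ℕ} {v : {n : ℕ // n ∈ S} → Bool} {u : ℕ → Bool}

open Formula

theorem Formula.IsConstructionSeq.isAssocTV {L : List Formula} (hL : IsConstructionSeq L)
    (hS : ∀ n, atom n ∈ L → n ∈ S) (hu : ∀ n (hn : n ∈ S), u n = v ⟨n, hn⟩) :
    IsAssocTV S v (L.map toExpr) (L.map (eval u)) := by
  have entry : ∀ j (hj : j < L.length),
      (L.map toExpr).getD j [] = L[j].toExpr ∧ (L.map (eval u)).getD j false = L[j].eval u :=
    fun j hj => by simp [List.getD_eq_getElem?_getD, hj]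
  have earlier : ∀ i (hi : i < L.length), ∀ ψ ∈ L[i].children, ∃ j < i, ∃ hj : j < L.length,
      L[j] = ψ := fun i hi ψ hψ => by
    obtain ⟨j, hj, rfl⟩ := List.mem_take_iff_getElem.mp (hL i hi ψ hψ)
    exact ⟨j, by omega, by omega, rfl⟩
  refine ⟨by simp, fun i hi => ?_⟩
  rw [List.length_map] at hi
  rw [(entry i hi).1, (entry i hi).2]
  have hchildren := earlier i hi
  have hmem : L[i] ∈ L := List.getElem_mem hi
  generalize L[i] = χ at hchildren hmem ⊢
  cases χ with
  | atom n => exact Or.inl ⟨n, hS n hmem, rfl, hu n _⟩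
  | neg φ =>
    obtain ⟨j, hji, hj, rfl⟩ := hchildren φ (by simp [children])
    exact Or.inr (Or.inl ⟨j, hji, by rw [(entry j hj).1]; rfl, by rw [(entry j hj).2]; rfl⟩)
  | bin c hc φ ψ =>
    obtain ⟨j, hji, hj, rfl⟩ := hchildren φ (by simp [children])
    obtain ⟨k, hki, hk, rfl⟩ := hchildren ψ (by simp [children])
    exact Or.inr (Or.inr ⟨c, hc, j, hji, k, hki, by rw [(entry j hj).1, (entry k hk).1]; rfl,
      by rw [(entry j hj).2, (entry k hk).2]; rfl⟩)

theorem IsCS.exists_toExpr {l : List Expr} (hl : IsCS l) :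
    ∀ i < l.length, ∃ φ : Formula, l.getD i [] = φ.toExpr := by
  intro i
  induction i using Nat.strong_induction_on with
  | _ i ih =>
    intro hi
    rcases hl i hi with ⟨n, h⟩ | ⟨j, hj, h⟩ | ⟨c, hc, j, hj, k, hk, h⟩
    · exact ⟨atom n, h⟩
    · obtain ⟨φ, hφ⟩ := ih j hj (by omega)
      exact ⟨neg φ, by rw [h, hφ]; rfl⟩
    · obtain ⟨φ, hφ⟩ := ih j hj (by omega)
      obtain ⟨ψ, hψ⟩ := ih k hk (by omega)
      exact ⟨bin c hc φ ψ, by rw [h, hφ, hψ]; rfl⟩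

theorem IsAssocTV.exists_eval {l : List Expr} {t : List Bool} (ht : IsAssocTV S v l t)
    (hu : ∀ n (hn : n ∈ S), u n = v ⟨n, hn⟩) :
    ∀ i < l.length, ∃ φ : Formula, l.getD i [] = φ.toExpr ∧ t.getD i false = φ.eval u := by
  intro i
  induction i using Nat.strong_induction_on with
  | _ i ih =>
    intro hi
    rcases ht.2 i hi with ⟨n, hn, h, hv⟩ | ⟨j, hj, h, hv⟩ | ⟨c, hc, j, hj, k, hk, h, hv⟩
    · exact ⟨atom n, h, by rw [hv, ← hu]; rfl⟩
    · obtain ⟨φ, hφ, hφv⟩ := ih j hj (by omega)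
      exact ⟨neg φ, by rw [h, hφ]; rfl, by rw [hv, hφv]; rfl⟩
    · obtain ⟨φ, hφ, hφv⟩ := ih j hj (by omega)
      obtain ⟨ψ, hψ, hψv⟩ := ih k hk (by omega)
      exact ⟨bin c hc φ ψ, by rw [h, hφ, hψ]; rfl, by rw [hv, hφv, hψv]; rfl⟩

theorem IsAssocTV.isCS {l : List Expr} {t : List Bool} (ht : IsAssocTV S v l t) : IsCS l := by
  intro i hi
  rcases ht.2 i hi with ⟨n, -, h, -⟩ | ⟨j, hj, h, -⟩ | ⟨c, hc, j, hj, k, hk, h, -⟩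
  · exact Or.inl ⟨n, h⟩
  · exact Or.inr (Or.inl ⟨j, hj, h⟩)
  · exact Or.inr (Or.inr ⟨c, hc, j, hj, k, hk, h⟩)

theorem List.getD_length_sub_one_of_getLast? {α : Type*} {l : List α} {a : α} (d : α)
    (h : l.getLast? = some a) : l.getD (l.length - 1) d = a := by
  rw [List.getD_eq_getElem?_getD, ← List.getLast?_eq_getElem?, h, Option.getD_some]

theorem IsWff.exists_toExpr {α : Expr} (hα : IsWff α) : ∃ φ : Formula, α = φ.toExpr := by
  obtain ⟨l, hl, hlast⟩ := hα
  obtain ⟨φ, hφ⟩ := hl.exists_toExpr (l.length - 1)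
    (by have := List.length_pos_of_mem (List.mem_of_getLast? hlast); omega)
  exact ⟨φ, (List.getD_length_sub_one_of_getLast? [] hlast).symm.trans hφ⟩

theorem IsAssocTV.eq_eval_of_getLast? {l : List Expr} {t : List Bool} {φ : Formula} {V : Bool}
    (ht : IsAssocTV S v l t) (hu : ∀ n (hn : n ∈ S), u n = v ⟨n, hn⟩)
    (hl : l.getLast? = some φ.toExpr) (hV : t.getLast? = some V) : V = φ.eval u := by
  obtain ⟨ψ, hψ, hψv⟩ := ht.exists_eval hu (l.length - 1)
    (by have := List.length_pos_of_mem (List.mem_of_getLast? hl); omega)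
  rw [List.getD_length_sub_one_of_getLast? [] hl] at hψ
  rw [← ht.1, List.getD_length_sub_one_of_getLast? false hV] at hψv
  rwa [Formula.toExpr_injective hψ]

end

theorem uniqueness_lemma (S : Set ℕ) (v : {n : ℕ // n ∈ S} → Bool) :
    ∀ α ∈ Sbar S, ∃! V : Bool, (α, V) ∈ Pset S v := by
  classical
  intro α hα
  obtain ⟨φ, rfl⟩ := hα.1.exists_toExpr
  let u : ℕ → Bool := fun n => if hn : n ∈ S then v ⟨n, hn⟩ else false
  have hu : ∀ n (hn : n ∈ S), u n = v ⟨n, hn⟩ := fun n hn => dif_pos hn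
  have hsymb : ∀ ψ ∈ φ.subformulas, ∀ n, SLSym.ss n ∈ ψ.toExpr → n ∈ S := fun ψ hψ n hn =>
    hα.2 n ((Formula.toExpr_infix_of_mem_subformulas hψ).subset hn)
  have hassoc := φ.isConstructionSeq_subformulas.isAssocTV
    (fun n hn => hsymb _ hn n (by simp [Formula.toExpr])) hu
  refine ⟨φ.eval u, ⟨hα, _, _, ⟨hassoc.isCS, ?_⟩, ?_, hassoc, ?_⟩, ?_⟩
  · simpa using hsymb
  · simp [Formula.getLast?_subformulas]
  · simp [Formula.getLast?_subformulas]
  · rintro V ⟨-, l, t, -, hl, ht, hV⟩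
    exact ht.eq_eval_of_getLast? hu hl hV
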